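/- Let G be a parity game. If D ⊆ V is an Odd-dominion in G, then Attr_Odd(D) is also an Odd-dominion in G. -/

import Mathlib

open Classical

noncomputable section

instance (priority := 5000) (n : ℕ) : WellFoundedLT (Fin n) :=
  Finite.to_wellFoundedLT

noncomputable instance (priority := 5000) (n : ℕ) : LinearOrder (Lex (Fin n → ℕ)) :=
  inferInstance

/-- Least element of a set, if it exists; otherwise a default value. -/
def sLeast {α : Type*} [Preorder α] (s : Set α) (dflt : α) : α :=
  if h : ∃ a, IsLeast s a then h.choose else dflt

/-- Greatest element of a set, if it exists; otherwise a default value. -/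
def sGreatest {α : Type*} [Preorder α] (s : Set α) (dflt : α) : α :=
  if h : ∃ a, IsGreatest s a then h.choose else dflt

/-- A parity game: a finite set of vertices with a total edge relation, a priority
function and an ownership function (`ownerEven v = true` iff `v ∈ V_Even`). -/
structure ParityGame (V : Type*) [Fintype V] where
  E : V → V → Prop
  total : ∀ v, ∃ w, E v w
  prio : V → ℕ
  ownerEven : V → Bool

namespace ParityGame

variable {V : Type*} [Fintype V] [DecidableEq V] (G : ParityGame V)

/-- `d` is one plus the maximal priority occurring in the game. -/
def d : ℕ := (Finset.univ.sup G.prio) + 1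

/-- The domain of (extended) measures: `⊤` together with `d`-tuples of naturals,
ordered lexicographically with `⊤` maximal.  This is `M_Even_ext` (together with
tuples that are nonzero at even positions, which are never used). -/
abbrev Meas : Type _ := WithTop (Lex (Fin G.d → ℕ))

/-- `nP i` is the number of vertices of priority `i`. -/
def nP (i : ℕ) : ℕ := (Finset.univ.filter (fun v => G.prio v = i)).card

/-- Membership in `M_Even`: `⊤`, or a `d`-tuple which is `0` at even positions and
bounded by `nP i` at odd positions `i`. -/
def inMEven (m : G.Meas) : Prop :=
  m = ⊤ ∨ ∃ f : Fin G.d → ℕ, m = ((toLex f : Lex (Fin G.d → ℕ)) : G.Meas) ∧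
    ∀ i : Fin G.d, (Even (i : ℕ) → f i = 0) ∧ (¬ Even (i : ℕ) → f i ≤ G.nP (i : ℕ))

/-- Membership in `M_Even_ext`: `⊤`, or a `d`-tuple which is `0` at even positions. -/
def inMEvenExt (m : G.Meas) : Prop :=
  m = ⊤ ∨ ∃ f : Fin G.d → ℕ, m = ((toLex f : Lex (Fin G.d → ℕ)) : G.Meas) ∧
    ∀ i : Fin G.d, Even (i : ℕ) → f i = 0

/-- Truncation of a measure to components `0, …, k` (other components set to `0`);
`⊤` is mapped to `⊤`. -/
def trunc (k : ℕ) (m : G.Meas) : G.Meas :=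
  WithTop.map (fun f : Lex (Fin G.d → ℕ) => toLex (fun j : Fin G.d => if (j : ℕ) ≤ k then ofLex f j else 0)) m

/-- `a ≥_k b` : comparison of measures on components `0, …, k` only. -/
def geAt (k : ℕ) (a b : G.Meas) : Prop := G.trunc k b ≤ G.trunc k a

/-- `a >_k b` : strict comparison of measures on components `0, …, k` only. -/
def gtAt (k : ℕ) (a b : G.Meas) : Prop := G.trunc k b < G.trunc k a

/-- The defining condition of `Prog(ρ,v,w)`. -/
def progCond (ρ : V → G.Meas) (v w : V) (m : G.Meas) : Prop :=
  if Even (G.prio v) then G.geAt (G.prio v) m (ρ w)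
  else (G.gtAt (G.prio v) m (ρ w) ∨ (m = ⊤ ∧ ρ w = ⊤))

/-- `Prog(ρ,v,w)`: the least element of `M_Even` satisfying `progCond`. -/
def Prog (ρ : V → G.Meas) (v w : V) : G.Meas :=
  if h : ∃ m, IsLeast {m | G.inMEven m ∧ G.progCond ρ v w m} m then h.choose else ⊤

/-- `ρ` takes values in `M_Even`. -/
def IsMeasure (ρ : V → G.Meas) : Prop := ∀ v, G.inMEven (ρ v)

/-- Game parity progress measure. -/
def IsGPM (ρ : V → G.Meas) : Prop :=
  G.IsMeasure ρ ∧ ∀ v,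
    (G.ownerEven v = true → ∃ w, G.E v w ∧ G.geAt (G.prio v) (ρ v) (G.Prog ρ v w)) ∧
    (G.ownerEven v = false → ∀ w, G.E v w → G.geAt (G.prio v) (ρ v) (G.Prog ρ v w))

/-- A play: an infinite `E`-path. -/
def IsPlay (π : ℕ → V) : Prop := ∀ n, G.E (π n) (π (n + 1))

/-- Priority `p` occurs infinitely often on `π`. -/
def InfOft (π : ℕ → V) (p : ℕ) : Prop := ∀ N, ∃ n, N ≤ n ∧ G.prio (π n) = p

/-- A play is won by Even iff the least priority occurring infinitely often is even. -/
def WonByEven (π : ℕ → V) : Prop := Even (sInf {p | G.InfOft π p})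

/-- Won by player `i` (`true` = Even, `false` = Odd). -/
def WonBy (i : Bool) (π : ℕ → V) : Prop :=
  if i then G.WonByEven π else ¬ G.WonByEven π

/-- The history of a play before time `n`. -/
def hist (π : ℕ → V) (n : ℕ) : List V := List.ofFn (fun k : Fin n => π (k : ℕ))

/-- A (history-dependent) strategy for player `i` is valid if it always moves along edges
from vertices of player `i`. -/
def ValidStrat (i : Bool) (σ : List V → V → V) : Prop :=
  ∀ h v, G.ownerEven v = i → G.E v (σ h v)

/-- Consistency of a play with a history-dependent strategy of player `i`. -/
def ConsH (i : Bool) (σ : List V → V → V) (π : ℕ → V) : Prop :=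
  ∀ n, G.ownerEven (π n) = i → π (n + 1) = σ (hist π n) (π n)

/-- Consistency of a play with a positional strategy of player `i`. -/
def ConsP (i : Bool) (σ : V → V) (π : ℕ → V) : Prop :=
  ∀ n, G.ownerEven (π n) = i → π (n + 1) = σ (π n)

/-- Winning region of player `i`: vertices from which `i` has a winning strategy. -/
def WinRegion (i : Bool) : Set V :=
  {v | ∃ σ : List V → V → V, G.ValidStrat i σ ∧
    ∀ π, G.IsPlay π → π 0 = v → G.ConsH i σ π → G.WonBy i π}

/-- The `i`-attractor into `U`. -/
def Attr (i : Bool) (U : Set V) : Set V :=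
  ⋂₀ {A | U ⊆ A ∧
    (∀ v, G.ownerEven v = i → (∃ w, G.E v w ∧ w ∈ A) → v ∈ A) ∧
    (∀ v, G.ownerEven v ≠ i → (∀ w, G.E v w → w ∈ A) → v ∈ A)}

/-- The guarded attractor `Attr^{≥k}_{Odd,W}(U)`. -/
def GAttr (k : ℕ) (W U : Set V) : Set V :=
  ⋂₀ {A | U ⊆ A ∧ A ⊆ W ∩ {v | k ≤ G.prio v} ∧
    ∀ u ∈ W ∩ {v | k ≤ G.prio v},
      (G.ownerEven u = false → (∃ w, G.E u w ∧ w ∈ A) → u ∈ A) ∧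
      (G.ownerEven u = true → (∀ w, G.E u w → w ∈ W → w ∈ A) → u ∈ A)}

/-- The lifting operator `Lift(ρ, v)`. -/
def Lift (ρ : V → G.Meas) (v : V) : V → G.Meas :=
  Function.update ρ v
    (if G.ownerEven v = true
      then max (ρ v) (sLeast {m | ∃ w, G.E v w ∧ m = G.Prog ρ v w} ⊤)
      else max (ρ v) (sGreatest {m | ∃ w, G.E v w ∧ m = G.Prog ρ v w} ⊤))

/-- The all-zero measure. -/
def zeroMeas : G.Meas := ((toLex (fun _ : Fin G.d => 0) : Lex (Fin G.d → ℕ)) : G.Meas)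

/-- A lifting sequence `ρ₀, …, ρ_N` in which `v` is the first vertex lifted to `⊤`. -/
def FirstTop (ρs : ℕ → V → G.Meas) (N : ℕ) (v : V) : Prop :=
  (∀ u, ρs 0 u = G.zeroMeas) ∧
  (∀ j < N, ∃ u, ρs (j + 1) = G.Lift (ρs j) u ∧
    (∀ w, ρs j w ≤ ρs (j + 1) w) ∧ ρs j ≠ ρs (j + 1)) ∧
  (∀ j < N, ∀ w, ρs j w ≠ ⊤) ∧
  ρs N v = ⊤

/-- The prefix `π 0 … π l` of a play is an `i`-dominated stretch. -/
def domStretchPrefix (π : ℕ → V) (i l : ℕ) : Prop :=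
  (∀ m ≤ l, i ≤ G.prio (π m)) ∧ (∃ m ≤ l, G.prio (π m) = i)

/-- The degree of the prefix `π 0 … π l` with respect to priority `i`: the number of
its vertices of priority `i`. -/
def degree (π : ℕ → V) (i l : ℕ) : ℕ :=
  ((Finset.range (l + 1)).filter (fun m => G.prio (π m) = i)).card

/-- The value `θ(π)` of a play: `⊤` if `π` is won by Odd, and otherwise the tuple whose
component at each odd position `i` is the degree of the maximal `i`-dominated stretch
that is a prefix of `π` (and `0` if there is no such prefix). -/
def theta (π : ℕ → V) : G.Meas :=
  if G.WonByEven π then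
    ((toLex (fun j : Fin G.d =>
      if Even (j : ℕ) then 0
      else sSup {c | ∃ l, G.domStretchPrefix π (j : ℕ) l ∧ c = G.degree π (j : ℕ) l}) :
        Lex (Fin G.d → ℕ)) : G.Meas)
  else ⊤

/-- `U` is an `i`-dominion inside the subgame induced on `W`. -/
def IsDominionIn (W : Set V) (i : Bool) (U : Set V) : Prop :=
  ∃ σ : List V → V → V,
    (∀ h u, u ∈ W → G.ownerEven u = i → G.E u (σ h u) ∧ σ h u ∈ W) ∧
    ∀ π, G.IsPlay π → (∀ n, π n ∈ W) → π 0 ∈ U → G.ConsH i σ π →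
      (∀ n, π n ∈ U) ∧ G.WonBy i π

/-- `U` is an `i`-dominion in `G`. -/
def IsDominion (i : Bool) (U : Set V) : Prop := G.IsDominionIn Set.univ i U

/-- Winning region of player `i` in the subgame induced on `W`. -/
def WinIn (W : Set V) (i : Bool) : Set V :=
  {v | v ∈ W ∧ ∃ σ : List V → V → V,
    (∀ h u, u ∈ W → G.ownerEven u = i → G.E u (σ h u) ∧ σ h u ∈ W) ∧
    ∀ π, G.IsPlay π → (∀ n, π n ∈ W) → π 0 = v → G.ConsH i σ π → G.WonBy i π}

end ParityGame

open ParityGame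

/-!
Player `i` (here Odd) plays as follows. Outside `D` it plays the attractor strategy,
which from every vertex of `Attr i D \ D` moves, whatever the opponent does, to a vertex of
`Attr i D` whose rank (the first layer of the attractor iteration containing it) is strictly
smaller; hence the play reaches `D` after finitely many steps. From the first visit to `D` on,
it plays the dominion strategy of `D` on the history since that visit. The play then stays in
`D` forever, and its suffix is won by `i`; since the winner of a play does not depend on a
finite prefix, so is the whole play.
-/

namespace ParityGame

section Plays

variable {V : Type*}

theorem exists_first_mem_of_rank_lt {A D : Set V} (r : V → ℕ) {π : ℕ → V} (h0 : π 0 ∈ A)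
    (hstep : ∀ n, (∀ k ≤ n, π k ∉ D) → π n ∈ A → π (n + 1) ∈ A ∧ r (π (n + 1)) < r (π n)) :
    ∃ N, π N ∈ D ∧ (∀ k < N, π k ∉ D) ∧ ∀ k ≤ N, π k ∈ A := by
  have hdescent : ∀ n, (∀ k < n, π k ∉ D) → π n ∈ A ∧ r (π n) + n ≤ r (π 0) := by
    intro n
    induction n with
    | zero => exact fun _ => ⟨h0, le_refl _⟩
    | succ n ih =>
      intro hn
      obtain ⟨hA, hr⟩ := ih fun k hk => hn k (by omega)
      obtain ⟨hA', hr'⟩ := hstep n (fun k hk => hn k (by omega)) hA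
      exact ⟨hA', by omega⟩
  have hhit : ∃ N, π N ∈ D := by
    by_contra! hnever
    have := (hdescent (r (π 0) + 1) fun k _ => hnever k).2
    omega
  exact ⟨Nat.find hhit, Nat.find_spec hhit, fun k hk => Nat.find_min hhit hk,
    fun k hk => (hdescent k fun j hj => Nat.find_min hhit (by omega)).1⟩

theorem hist_succ (π : ℕ → V) (n : ℕ) : hist π (n + 1) = hist π n ++ [π n] := by
  simp only [hist, List.ofFn_succ', List.concat_eq_append, Fin.val_castSucc, Fin.val_last]

theorem hist_drop (π : ℕ → V) (N m : ℕ) :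
    (hist π (N + m)).drop N = hist (fun k => π (N + k)) m :=
  List.ext_getElem (by simp [hist]) fun _ _ _ => by simp [hist]

/-- Play `τ` until `D` is first visited, then play `σ` on the history since that visit. -/
def switchStrategy (D : Set V) (τ : V → V) (σ : List V → V → V) (h : List V) (v : V) : V :=
  let first := (h ++ [v]).findIdx (· ∈ D)
  if first < (h ++ [v]).length then σ (h.drop first) v else τ v

variable {D : Set V} {τ : V → V} {σ : List V → V → V} {π : ℕ → V}

theorem switchStrategy_hist_of_forall_notMem {n : ℕ} (hn : ∀ k ≤ n, π k ∉ D) :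
    switchStrategy D τ σ (hist π n) (π n) = τ (π n) := by
  have hfirst : (hist π (n + 1)).findIdx (· ∈ D) = (hist π (n + 1)).length :=
    List.findIdx_eq_length.2 fun x hx => by
      obtain ⟨k, rfl⟩ := List.mem_ofFn.1 hx
      simpa using hn k (Nat.lt_succ_iff.1 k.2)
  simp only [switchStrategy, ← hist_succ, hfirst, lt_irrefl, if_false]

theorem switchStrategy_hist_of_first_mem {N : ℕ} (hN : π N ∈ D) (hbefore : ∀ k < N, π k ∉ D)
    (m : ℕ) : switchStrategy D τ σ (hist π (N + m)) (π (N + m)) =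
      σ (hist (fun k => π (N + k)) m) (π (N + m)) := by
  have hlen : N < (hist π (N + m + 1)).length := by simp [hist]
  have hfirst : (hist π (N + m + 1)).findIdx (· ∈ D) = N :=
    (List.findIdx_eq hlen).2
      ⟨by simpa only [hist, List.getElem_ofFn, decide_eq_true_eq] using hN, fun j hj => by
        simpa only [hist, List.getElem_ofFn, decide_eq_false_iff_not] using hbefore j hj⟩
  simp only [switchStrategy, ← hist_succ, hfirst, hlen, if_true, hist_drop]

end Plays

variable {V : Type*} [Fintype V] (G : ParityGame V)

section Attractor

variable (i : Bool) (D : Set V)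

def attrLayer : ℕ → Set V
  | 0 => D
  | n + 1 => attrLayer n ∪ {v | G.ownerEven v = i ∧ ∃ w, G.E v w ∧ w ∈ attrLayer n} ∪
      {v | G.ownerEven v ≠ i ∧ ∀ w, G.E v w → w ∈ attrLayer n}

theorem attrLayer_mono : Monotone (G.attrLayer i D) :=
  monotone_nat_of_le_succ fun _ _ hv => Or.inl (Or.inl hv)

theorem attrLayer_subset_attr (n : ℕ) : G.attrLayer i D n ⊆ G.Attr i D := by
  refine Set.subset_sInter fun A ⟨hDA, hown, hopp⟩ => ?_
  induction n with
  | zero => exact hDA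
  | succ n ih =>
    rintro v ((hv | ⟨hv, w, hvw, hw⟩) | ⟨hv, hsucc⟩)
    · exact ih hv
    · exact hown v hv ⟨w, hvw, ih hw⟩
    · exact hopp v hv fun w hvw => ih (hsucc w hvw)

theorem subset_attr : D ⊆ G.Attr i D :=
  G.attrLayer_subset_attr i D 0

theorem attr_subset_iUnion_attrLayer : G.Attr i D ⊆ ⋃ n, G.attrLayer i D n := by
  refine Set.sInter_subset_of_mem ⟨Set.subset_iUnion (G.attrLayer i D) 0, ?_, ?_⟩
  · rintro v hv ⟨w, hvw, hw⟩
    obtain ⟨n, hn⟩ := Set.mem_iUnion.1 hw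
    exact Set.mem_iUnion.2 ⟨n + 1, Or.inl (Or.inr ⟨hv, w, hvw, hn⟩)⟩
  · intro v hv hsucc
    -- finitely many vertices, so all successors of `v` lie in one common layer
    have hsome : ∀ w, ∃ n, G.E v w → w ∈ G.attrLayer i D n := by
      intro w
      by_cases hvw : G.E v w
      · exact (Set.mem_iUnion.1 (hsucc w hvw)).imp fun _ hn _ => hn
      · exact ⟨0, fun h => absurd h hvw⟩
    choose layer hlayer using hsome
    refine Set.mem_iUnion.2 ⟨Finset.univ.sup layer + 1, Or.inr ⟨hv, fun w hvw => ?_⟩⟩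
    exact G.attrLayer_mono i D (Finset.le_sup (Finset.mem_univ w)) (hlayer w hvw)

def attrRank (v : V) : ℕ := sInf {n | v ∈ G.attrLayer i D n}

theorem attrRank_lt_of_mem_attrLayer {v w : V} {n : ℕ} (hv : G.attrRank i D v = n + 1)
    (hw : w ∈ G.attrLayer i D n) : G.attrRank i D w < G.attrRank i D v :=
  hv ▸ Nat.lt_succ_of_le (Nat.sInf_le hw)

theorem attr_succ_of_notMem {v : V} (hv : v ∈ G.Attr i D) (hvD : v ∉ D) :
    (G.ownerEven v = i →
      ∃ w, G.E v w ∧ w ∈ G.Attr i D ∧ G.attrRank i D w < G.attrRank i D v) ∧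
    (G.ownerEven v ≠ i →
      ∀ w, G.E v w → w ∈ G.Attr i D ∧ G.attrRank i D w < G.attrRank i D v) := by
  have hrank : v ∈ G.attrLayer i D (G.attrRank i D v) :=
    Nat.sInf_mem (Set.mem_iUnion.1 (G.attr_subset_iUnion_attrLayer i D hv))
  obtain ⟨n, hn⟩ : ∃ n, G.attrRank i D v = n + 1 :=
    Nat.exists_eq_succ_of_ne_zero fun h0 => hvD (by rwa [h0] at hrank)
  have hvn : v ∉ G.attrLayer i D n := Nat.notMem_of_lt_sInf (show n < G.attrRank i D v by omega)
  rw [hn] at hrank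
  rcases hrank with (hv' | ⟨hown, w, hvw, hw⟩) | ⟨hown, hsucc⟩
  · exact absurd hv' hvn
  · exact ⟨fun _ => ⟨w, hvw, G.attrLayer_subset_attr i D n hw,
      G.attrRank_lt_of_mem_attrLayer i D hn hw⟩, fun h => absurd hown h⟩
  · exact ⟨fun h => absurd h hown, fun _ w hvw => ⟨G.attrLayer_subset_attr i D n (hsucc w hvw),
      G.attrRank_lt_of_mem_attrLayer i D hn (hsucc w hvw)⟩⟩

theorem exists_attractorStrategy :
    ∃ τ : V → V, (∀ v, G.E v (τ v)) ∧
      ∀ v ∈ G.Attr i D, v ∉ D → ∀ w, G.E v w → (G.ownerEven v = i → w = τ v) →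
        w ∈ G.Attr i D ∧ G.attrRank i D w < G.attrRank i D v := by
  have hmove : ∀ v, ∃ w, G.E v w ∧ (v ∈ G.Attr i D → v ∉ D → G.ownerEven v = i →
      w ∈ G.Attr i D ∧ G.attrRank i D w < G.attrRank i D v) := by
    intro v
    by_cases h : v ∈ G.Attr i D ∧ v ∉ D ∧ G.ownerEven v = i
    · obtain ⟨w, hvw, hw⟩ := (G.attr_succ_of_notMem i D h.1 h.2.1).1 h.2.2
      exact ⟨w, hvw, fun _ _ _ => hw⟩
    · obtain ⟨w, hvw⟩ := G.total v
      exact ⟨w, hvw, fun hA hD hown => absurd ⟨hA, hD, hown⟩ h⟩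
  choose τ hτ using hmove
  refine ⟨τ, fun v => (hτ v).1, fun v hA hD w hvw hw => ?_⟩
  by_cases hown : G.ownerEven v = i
  · exact hw hown ▸ (hτ v).2 hA hD hown
  · exact (G.attr_succ_of_notMem i D hA hD).2 hown w hvw

end Attractor

theorem infOft_shift (π : ℕ → V) (N : ℕ) : G.InfOft (fun m => π (N + m)) = G.InfOft π := by
  funext p
  refine propext ⟨fun h M => ?_, fun h M => ?_⟩
  · obtain ⟨m, hm, hp⟩ := h M
    exact ⟨N + m, by omega, hp⟩
  · obtain ⟨n, hn, hp⟩ := h (N + M)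
    refine ⟨n - N, by omega, ?_⟩
    dsimp only
    rwa [Nat.add_sub_cancel' (by omega : N ≤ n)]

theorem wonBy_shift (i : Bool) (π : ℕ → V) (N : ℕ) :
    G.WonBy i (fun m => π (N + m)) ↔ G.WonBy i π := by
  simp only [WonBy, WonByEven, infOft_shift]

variable {D : Set V} {τ : V → V} {σ : List V → V → V} {π : ℕ → V}

theorem switchStrategy_edge {i : Bool} (hτ : ∀ v, G.E v (τ v))
    (hσ : ∀ h v, G.ownerEven v = i → G.E v (σ h v)) (h : List V) {v : V}
    (hv : G.ownerEven v = i) : G.E v (switchStrategy D τ σ h v) := by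
  dsimp only [switchStrategy]
  split
  · exact hσ _ v hv
  · exact hτ v

theorem consH_shift_of_switchStrategy {i : Bool} {N : ℕ}
    (hcons : G.ConsH i (switchStrategy D τ σ) π) (hN : π N ∈ D)
    (hbefore : ∀ k < N, π k ∉ D) : G.ConsH i σ (fun m => π (N + m)) := fun m hm =>
  (hcons (N + m) hm).trans (switchStrategy_hist_of_first_mem hN hbefore m)

theorem IsDominion.attr {i : Bool} (hD : G.IsDominion i D) :
    G.IsDominion i (G.Attr i D) := by
  obtain ⟨σ, hσ, hwin⟩ := hD
  obtain ⟨τ, hτ, hrank⟩ := G.exists_attractorStrategy i D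
  refine ⟨switchStrategy D τ σ, fun h v _ hv =>
    ⟨G.switchStrategy_edge hτ (fun h v hv => (hσ h v trivial hv).1) h hv, trivial⟩, ?_⟩
  intro π hπ _ h0 hcons
  have hstep : ∀ n, (∀ k ≤ n, π k ∉ D) → π n ∈ G.Attr i D →
      π (n + 1) ∈ G.Attr i D ∧ G.attrRank i D (π (n + 1)) < G.attrRank i D (π n) :=
    fun n hn hA => hrank _ hA (hn n le_rfl) _ (hπ n) fun hown =>
      (hcons n hown).trans (switchStrategy_hist_of_forall_notMem hn)
  obtain ⟨N, hN, hbefore, hattr⟩ := exists_first_mem_of_rank_lt (G.attrRank i D) h0 hstep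
  obtain ⟨hstay, hwon⟩ := hwin (fun m => π (N + m)) (fun m => hπ (N + m)) (fun _ => trivial) hN
    (G.consH_shift_of_switchStrategy hcons hN hbefore)
  refine ⟨fun n => ?_, (G.wonBy_shift i π N).1 hwon⟩
  rcases le_or_gt n N with hn | hn
  · exact hattr n hn
  · obtain ⟨m, rfl⟩ := Nat.exists_eq_add_of_le hn.le
    exact G.subset_attr i D (hstay m)

end ParityGame

theorem attractor_of_dominion_is_dominion_general
    {V : Type*} [Fintype V] (G : ParityGame V) (D : Set V)
    (hD : G.IsDominion false D) :
    G.IsDominion false (G.Attr false D) :=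
  hD.attr

/-- the Odd-attractor of an Odd-dominion is an Odd-dominion. -/
theorem attractor_of_dominion_is_dominion
    {V : Type*} [Fintype V] [DecidableEq V] (G : ParityGame V) (D : Set V)
    (hD : G.IsDominion false D) :
    G.IsDominion false (G.Attr false D) :=
  attractor_of_dominion_is_dominion_general G D hD

end
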